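/- Correctness of the flag construction for Φ_o = G_{[0,T_o]} F_{[0,T_in]} φ: with the flag f for the inner formula F_{[0,T_in]}φ, define Sat(t) = 1 if f(t) > 0 and Sat(t) = 0 otherwise, and define fin recursively by fin(T_in + 1) = Sat(T_in + 1) and fin(t+1) = min(Sat(t+1), fin(t)) for t ≥ T_in + 1. Then fin(T_o + T_in + 1) = 1 if and only if for every integer t ∈ {0,…,T_o} there exists an integer t' ∈ {0,…,T_in} such that φ(s(t + t')) holds, i.e., if and only if the discrete-time signal s satisfies G_{[0,T_o]} F_{[0,T_in]} φ at time 0. -/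
import Mathlib


/-- Flag for the inner formula F_{[0,T_in]}φ: f(0) = 0, f(t+1) = T_in + 1 if φ(s(t)),
and f(t+1) = max(f(t) − 1, 0) otherwise (truncated subtraction on ℕ). -/
def flagF {S : Type*} (s : ℕ → S) (φ : S → Prop) [DecidablePred φ] (Tin : ℕ) : ℕ → ℕ
  | 0 => 0
  | (t + 1) => if φ (s t) then Tin + 1 else flagF s φ Tin t - 1

lemma flagF_lt {S : Type*} (s : ℕ → S) (φ : S → Prop) [DecidablePred φ] (Tin : ℕ) :
    ∀ t d, d < flagF s φ Tin t ↔ ∃ k, k < t ∧ t + d ≤ k + Tin + 1 ∧ φ (s k) := by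
  intro t
  induction t with
  | zero => intro d; simp [flagF]
  | succ t ih =>
    intro d
    by_cases h : φ (s t)
    · simp only [flagF, if_pos h]
      constructor
      · intro hd; exact ⟨t, by omega, by omega, h⟩
      · intro ⟨k, hk, hk2, _⟩; omega
    · simp only [flagF, if_neg h]
      rw [Nat.lt_sub_iff_add_lt, ih (d + 1)]
      constructor
      · intro ⟨k, hk, hk2, hk3⟩; exact ⟨k, by omega, by omega, hk3⟩
      · intro ⟨k, hk, hk2, hk3⟩
        have : k ≠ t := fun he => h (he ▸ hk3)
        exact ⟨k, by omega, by omega, hk3⟩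

/-- Correctness of the flag construction for Φ_o = G_{[0,T_o]} F_{[0,T_in]} φ. -/
theorem stmt18 {S : Type*} (s : ℕ → S) (φ : S → Prop) [DecidablePred φ] (To Tin : ℕ)
    (Sat : ℕ → ℕ) (hSat : ∀ t : ℕ, Sat t = if 0 < flagF s φ Tin t then 1 else 0)
    (fin : ℕ → ℕ) (hfin0 : fin (Tin + 1) = Sat (Tin + 1))
    (hfin : ∀ t : ℕ, Tin + 1 ≤ t → fin (t + 1) = min (Sat (t + 1)) (fin t)) :
    fin (To + Tin + 1) = 1 ↔ ∀ t ≤ To, ∃ t' ≤ Tin, φ (s (t + t')) := by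
  have hSat01 : ∀ t, Sat t ≤ 1 := by
    intro t; rw [hSat t]; split <;> omega
  have hSat1 : ∀ i, Sat (Tin + 1 + i) = 1 ↔ ∃ t' ≤ Tin, φ (s (i + t')) := by
    intro i
    rw [hSat]
    have := flagF_lt s φ Tin (Tin + 1 + i) 0
    constructor
    · intro hif
      have hpos : 0 < flagF s φ Tin (Tin + 1 + i) := by
        by_contra hc; simp [hc] at hif
      obtain ⟨k, hk, hk2, hk3⟩ := this.1 hpos
      exact ⟨k - i, by omega, by rw [show i + (k - i) = k by omega]; exact hk3⟩
    · intro ⟨t', ht', hφ⟩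
      have hpos : 0 < flagF s φ Tin (Tin + 1 + i) :=
        this.2 ⟨i + t', by omega, by omega, hφ⟩
      simp [hpos]
  -- fin characterization
  have key : ∀ j, fin (Tin + 1 + j) ≤ 1 ∧
      (fin (Tin + 1 + j) = 1 ↔ ∀ i ≤ j, Sat (Tin + 1 + i) = 1) := by
    intro j
    induction j with
    | zero =>
      simp only [Nat.add_zero, hfin0]
      refine ⟨hSat01 _, ?_⟩
      constructor
      · intro h i hi; interval_cases i; exact h
      · intro h; exact h 0 le_rfl
    | succ j ih =>
      have hrec : fin (Tin + 1 + (j + 1)) = min (Sat (Tin + 1 + (j + 1))) (fin (Tin + 1 + j)) := by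
        have := hfin (Tin + 1 + j) (by omega)
        rw [show Tin + 1 + (j + 1) = Tin + 1 + j + 1 by omega]
        exact this
      obtain ⟨ihle, ihiff⟩ := ih
      refine ⟨by rw [hrec]; exact le_trans (min_le_right _ _) ihle, ?_⟩
      rw [hrec]
      constructor
      · intro h i hi
        have h1 : Sat (Tin + 1 + (j + 1)) = 1 := by
          have := hSat01 (Tin + 1 + (j + 1)); omega
        have h2 : fin (Tin + 1 + j) = 1 := by omega
        rcases Nat.lt_or_ge i (j + 1) with hi' | hi'
        · exact ihiff.1 h2 i (by omega)
        · rw [show i = j + 1 by omega]; exact h1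
      · intro h
        have h1 : Sat (Tin + 1 + (j + 1)) = 1 := h (j + 1) le_rfl
        have h2 : fin (Tin + 1 + j) = 1 := ihiff.2 fun i hi => h i (by omega)
        rw [h1, h2]; exact min_self 1
  rw [show To + Tin + 1 = Tin + 1 + To by omega, (key To).2]
  constructor
  · intro h t ht; exact (hSat1 t).1 (h t ht)
  · intro h i hi; exact (hSat1 i).2 (h i hi)
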